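/- arXiv:2202.10523 — 2 statements merged into one kernel-verified Lean document; each statement's English description precedes it below -/
import Mathlib

section
/- Corollary 4 (linear convergence of DSI-HG under the strong MVI assumption). Suppose (w*, δ*) is a solution of the strong MVI with parameter μ > 0, and let σ, τ > 0 satisfy max{L12·(στ)^{1/2}, L11·σ} ≤ 1/3 and θ = max{1/(1 + μσ), 1/(1 + μτ)}. Let (w^k, δ^k) be a DSI-HG trajectory with parameters σ, τ, θ. Then there is a constant C ≥ 0, independent of K, such that for every K ≥ 1: ‖w* − w^K‖² ≤ C·θ^K and ‖δ* − δ^K‖² ≤ C·θ^K. -/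
open scoped RealInnerProductSpace

/-- `γ` is a subgradient of `h` at `x`. -/
def IsSubgradient {X : Type*} [NormedAddCommGroup X] [InnerProductSpace ℝ X]
    (h : X → ℝ) (x γ : X) : Prop :=
  ∀ u, h u ≥ h x + ⟪γ, u - x⟫

private lemma inner_sub_sub_aux {X : Type*} [NormedAddCommGroup X] [InnerProductSpace ℝ X]
    (x y z : X) :
    ⟪x - y, x - z⟫ = (‖x - y‖ ^ 2 + ‖x - z‖ ^ 2 - ‖y - z‖ ^ 2) / 2 := by
  have h := norm_sub_sq_real (x - y) (x - z)
  rw [show (x - y) - (x - z) = -(y - z) by abel, norm_neg] at h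
  linarith

private lemma aux_young (σ τ L11 L12 X Y Z : ℝ) (hσ : 0 < σ) (hτ : 0 < τ)
    (hL11 : 0 ≤ L11) (hL12 : 0 ≤ L12)
    (h1 : L11 * σ ≤ 1 / 3) (h2 : L12 * Real.sqrt (σ * τ) ≤ 1 / 3)
    (hX : 0 ≤ X) (hY : 0 ≤ Y) (hZ : 0 ≤ Z) :
    6 * σ * τ * ((L11 * X + L12 * Y) * Z) ≤ τ * X ^ 2 + σ * Y ^ 2 + 2 * τ * Z ^ 2 := by
  have hsa : (0:ℝ) < Real.sqrt σ := Real.sqrt_pos.2 hσ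
  have hsb : (0:ℝ) < Real.sqrt τ := Real.sqrt_pos.2 hτ
  have sa2 : Real.sqrt σ ^ 2 = σ := Real.sq_sqrt hσ.le
  have sb2 : Real.sqrt τ ^ 2 = τ := Real.sq_sqrt hτ.le
  have hab : Real.sqrt (σ * τ) = Real.sqrt σ * Real.sqrt τ := Real.sqrt_mul hσ.le τ
  rw [hab] at h2
  have k1 : 6 * σ * τ * (L11 * X * Z) ≤ τ * X ^ 2 + τ * Z ^ 2 := by
    nlinarith [mul_nonneg hτ.le (sq_nonneg (X - Z)),
      mul_nonneg (mul_nonneg hτ.le hX) hZ, hσ.le, mul_pos hσ hτ]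
  have k2 : 6 * σ * τ * (L12 * Y * Z) ≤ σ * Y ^ 2 + τ * Z ^ 2 := by
    rw [← sa2, ← sb2]
    nlinarith [sq_nonneg (Real.sqrt σ * Y - Real.sqrt τ * Z),
      mul_nonneg (mul_nonneg (mul_pos hsa hsb).le hY) hZ, h2, mul_pos hsa hsb]
  nlinarith [k1, k2]

set_option maxHeartbeats 4000000 in
/-- Corollary 4: linear convergence of DSI-HG under the strong MVI assumption. -/
theorem dsihg_linear_convergence_strong_mvi
    {E F : Type*}
    [NormedAddCommGroup E] [InnerProductSpace ℝ E] [FiniteDimensional ℝ E]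
    [NormedAddCommGroup F] [InnerProductSpace ℝ F] [FiniteDimensional ℝ F]
    (φ : E → F → ℝ) (Gw : E → F → E) (Gd : E → F → F)
    (hgw : ∀ (w : E) (δ : F), HasGradientAt (fun w' => φ w' δ) (Gw w δ) w)
    (hgd : ∀ (w : E) (δ : F), HasGradientAt (fun δ' => φ w δ') (Gd w δ) δ)
    (L11 L12 L22 : ℝ) (hL11 : 0 < L11) (hL12 : 0 < L12) (hL22 : 0 < L22)
    (hLww : ∀ (w w' : E) (δ : F), ‖Gw w δ - Gw w' δ‖ ≤ L11 * ‖w - w'‖)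
    (hLdw : ∀ (w w' : E) (δ : F), ‖Gd w δ - Gd w' δ‖ ≤ L12 * ‖w - w'‖)
    (hLwd : ∀ (w : E) (δ δ' : F), ‖Gw w δ - Gw w δ'‖ ≤ L12 * ‖δ - δ'‖)
    (hLdd : ∀ (w : E) (δ δ' : F), ‖Gd w δ - Gd w δ'‖ ≤ L22 * ‖δ - δ'‖)
    (f : E → ℝ) (g : F → ℝ)
    (hf : ConvexOn ℝ Set.univ f) (hg : ConvexOn ℝ Set.univ g)
    (wstar : E) (δstar : F) (μ : ℝ) (hμ : 0 < μ)
    (hMVI : ∀ (w : E) (δ : F) (γf : E) (γg : F),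
      IsSubgradient f w γf → IsSubgradient g δ γg →
      ⟪γf + Gw w δ, w - wstar⟫ + ⟪γg - Gd w δ, δ - δstar⟫ ≥
        (μ / 2) * (‖w - wstar‖ ^ 2 + ‖δ - δstar‖ ^ 2))
    (σ τ : ℝ) (hσ : 0 < σ) (hτ : 0 < τ)
    (hstep : max (L12 * Real.sqrt (σ * τ)) (L11 * σ) ≤ 1 / 3)
    (θ : ℝ) (hθ : θ = max (1 / (1 + μ * σ)) (1 / (1 + μ * τ)))
    (w : ℕ → E) (d : ℕ → F)
    (htraj : ∀ k : ℕ, ∃ (γf : E) (γg : F),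
      IsSubgradient f (w (k + 1)) γf ∧ IsSubgradient g (d (k + 1)) γg ∧
      (0 : E) = γf + σ⁻¹ • (w (k + 1) - w k) + Gw (w k) (d k)
        + θ • (Gw (w k) (d k) - Gw (w (k - 1)) (d (k - 1))) ∧
      (0 : F) = γg + τ⁻¹ • (d (k + 1) - d k) - Gd (w (k + 1)) (d (k + 1))) :
    ∃ C : ℝ, 0 ≤ C ∧ ∀ K : ℕ, 1 ≤ K →
      ‖wstar - w K‖ ^ 2 ≤ C * θ ^ K ∧ ‖δstar - d K‖ ^ 2 ≤ C * θ ^ K := by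
  have h1 : L11 * σ ≤ 1 / 3 := le_trans (le_max_right _ _) hstep
  have h2 : L12 * Real.sqrt (σ * τ) ≤ 1 / 3 := le_trans (le_max_left _ _) hstep
  have hθ0 : 0 < θ := by
    rw [hθ]
    exact lt_of_lt_of_le (by positivity) (le_max_left _ _)
  have hθ1 : θ ≤ 1 := by
    rw [hθ]
    apply max_le
    · rw [div_le_one (by positivity)]; nlinarith [mul_pos hμ hσ]
    · rw [div_le_one (by positivity)]; nlinarith [mul_pos hμ hτ]
  have hθσ : 1 ≤ θ * (1 + μ * σ) := by
    have h : 1 / (1 + μ * σ) ≤ θ := by rw [hθ]; exact le_max_left _ _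
    rw [div_le_iff₀ (by positivity)] at h
    linarith
  have hθτ : 1 ≤ θ * (1 + μ * τ) := by
    have h : 1 / (1 + μ * τ) ≤ θ := by rw [hθ]; exact le_max_right _ _
    rw [div_le_iff₀ (by positivity)] at h
    linarith
  set e : ℕ → E := fun k => Gw (w k) (d k) - Gw (w (k - 1)) (d (k - 1)) with he
  set P : ℕ → ℝ := fun k =>
    3 * τ * (1 + μ * σ) * ‖w k - wstar‖ ^ 2 + 3 * σ * (1 + μ * τ) * ‖d k - δstar‖ ^ 2
      - 6 * σ * τ * ⟪e k, w k - wstar⟫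
      + τ * ‖w k - w (k - 1)‖ ^ 2 + σ * ‖d k - d (k - 1)‖ ^ 2 with hP
  have hEk : ∀ k, ‖e k‖ ≤ L11 * ‖w k - w (k - 1)‖ + L12 * ‖d k - d (k - 1)‖ := by
    intro k
    have heq : e k = (Gw (w k) (d k) - Gw (w (k - 1)) (d k))
        + (Gw (w (k - 1)) (d k) - Gw (w (k - 1)) (d (k - 1))) := by
      simp only [he]; abel
    rw [heq]
    exact le_trans (norm_add_le _ _) (add_le_add (hLww _ _ _) (hLwd _ _ _))
  have hlow : ∀ k, τ * ‖w k - wstar‖ ^ 2 + σ * ‖d k - δstar‖ ^ 2 ≤ P k := by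
    intro k
    have hcs : ⟪e k, w k - wstar⟫ ≤ ‖e k‖ * ‖w k - wstar‖ := real_inner_le_norm _ _
    have hE := mul_le_mul_of_nonneg_right (hEk k) (norm_nonneg (w k - wstar))
    have hy := aux_young σ τ L11 L12 ‖w k - w (k - 1)‖ ‖d k - d (k - 1)‖ ‖w k - wstar‖
      hσ hτ hL11.le hL12.le h1 h2 (norm_nonneg _) (norm_nonneg _) (norm_nonneg _)
    have h6 : 6 * σ * τ * ⟪e k, w k - wstar⟫
        ≤ τ * ‖w k - w (k - 1)‖ ^ 2 + σ * ‖d k - d (k - 1)‖ ^ 2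
          + 2 * τ * ‖w k - wstar‖ ^ 2 := by
      have hh := mul_le_mul_of_nonneg_left (le_trans hcs hE)
        (by positivity : (0:ℝ) ≤ 6 * σ * τ)
      linarith
    simp only [hP]
    nlinarith [h6,
      mul_nonneg (mul_nonneg (mul_nonneg hτ.le hμ.le) hσ.le) (sq_nonneg ‖w k - wstar‖),
      mul_nonneg (mul_nonneg (mul_nonneg hσ.le hμ.le) hτ.le) (sq_nonneg ‖d k - δstar‖),
      mul_nonneg hσ.le (sq_nonneg ‖d k - δstar‖)]
  have hstepk : ∀ k, P (k + 1) ≤ θ * P k := by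
    intro k
    obtain ⟨γf, γg, hγf, hγg, hw1, hd1⟩ := htraj k
    have hα : γf + Gw (w (k + 1)) (d (k + 1))
        = e (k + 1) - θ • e k - σ⁻¹ • (w (k + 1) - w k) := by
      simp only [he, Nat.add_sub_cancel]
      linear_combination (norm := module) -hw1
    have hβ : γg - Gd (w (k + 1)) (d (k + 1)) = -(τ⁻¹ • (d (k + 1) - d k)) := by
      linear_combination (norm := module) -hd1
    have hmvi := hMVI (w (k + 1)) (d (k + 1)) γf γg hγf hγg
    rw [hα, hβ] at hmvi
    have hsplit : ⟪e k, w (k + 1) - wstar⟫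
        = ⟪e k, w k - wstar⟫ + ⟪e k, w (k + 1) - w k⟫ := by
      rw [← inner_add_right]; congr 1; abel
    have expand1 : ⟪e (k + 1) - θ • e k - σ⁻¹ • (w (k + 1) - w k), w (k + 1) - wstar⟫
        = ⟪e (k + 1), w (k + 1) - wstar⟫ - θ * ⟪e k, w k - wstar⟫
          - θ * ⟪e k, w (k + 1) - w k⟫
          - σ⁻¹ * ((‖w (k + 1) - w k‖ ^ 2 + ‖w (k + 1) - wstar‖ ^ 2
              - ‖w k - wstar‖ ^ 2) / 2) := by
      rw [inner_sub_left, inner_sub_left, real_inner_smul_left, real_inner_smul_left,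
        inner_sub_sub_aux, hsplit]
      ring
    have expand2 : ⟪-(τ⁻¹ • (d (k + 1) - d k)), d (k + 1) - δstar⟫
        = -(τ⁻¹ * ((‖d (k + 1) - d k‖ ^ 2 + ‖d (k + 1) - δstar‖ ^ 2
            - ‖d k - δstar‖ ^ 2) / 2)) := by
      rw [inner_neg_left, real_inner_smul_left, inner_sub_sub_aux]
    rw [expand1, expand2] at hmvi
    have key2 : 3 * σ * τ * μ * (‖w (k + 1) - wstar‖ ^ 2 + ‖d (k + 1) - δstar‖ ^ 2)
        ≤ 6 * σ * τ * ⟪e (k + 1), w (k + 1) - wstar⟫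
          - 6 * σ * τ * θ * ⟪e k, w k - wstar⟫ - 6 * σ * τ * θ * ⟪e k, w (k + 1) - w k⟫
          - 3 * τ * (‖w (k + 1) - w k‖ ^ 2 + ‖w (k + 1) - wstar‖ ^ 2 - ‖w k - wstar‖ ^ 2)
          - 3 * σ * (‖d (k + 1) - d k‖ ^ 2 + ‖d (k + 1) - δstar‖ ^ 2
              - ‖d k - δstar‖ ^ 2) := by
      have hmul := mul_le_mul_of_nonneg_left (ge_iff_le.mp hmvi)
        (by positivity : (0:ℝ) ≤ 6 * σ * τ)
      have e1 : 6 * σ * τ * (⟪e (k + 1), w (k + 1) - wstar⟫ - θ * ⟪e k, w k - wstar⟫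
            - θ * ⟪e k, w (k + 1) - w k⟫
            - σ⁻¹ * ((‖w (k + 1) - w k‖ ^ 2 + ‖w (k + 1) - wstar‖ ^ 2
                - ‖w k - wstar‖ ^ 2) / 2)
            + -(τ⁻¹ * ((‖d (k + 1) - d k‖ ^ 2 + ‖d (k + 1) - δstar‖ ^ 2
                - ‖d k - δstar‖ ^ 2) / 2)))
          = 6 * σ * τ * ⟪e (k + 1), w (k + 1) - wstar⟫
          - 6 * σ * τ * θ * ⟪e k, w k - wstar⟫ - 6 * σ * τ * θ * ⟪e k, w (k + 1) - w k⟫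
          - 3 * τ * (‖w (k + 1) - w k‖ ^ 2 + ‖w (k + 1) - wstar‖ ^ 2 - ‖w k - wstar‖ ^ 2)
          - 3 * σ * (‖d (k + 1) - d k‖ ^ 2 + ‖d (k + 1) - δstar‖ ^ 2
              - ‖d k - δstar‖ ^ 2) := by
        field_simp
        ring
      linarith [hmul, e1]
    have hcs : -(‖e k‖ * ‖w (k + 1) - w k‖) ≤ ⟪e k, w (k + 1) - w k⟫ :=
      neg_le_of_abs_le (abs_real_inner_le_norm _ _)
    have hE := mul_le_mul_of_nonneg_right (hEk k) (norm_nonneg (w (k + 1) - w k))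
    have hy := aux_young σ τ L11 L12 ‖w k - w (k - 1)‖ ‖d k - d (k - 1)‖ ‖w (k + 1) - w k‖
      hσ hτ hL11.le hL12.le h1 h2 (norm_nonneg _) (norm_nonneg _) (norm_nonneg _)
    have hJ : -(6 * σ * τ * θ * ⟪e k, w (k + 1) - w k⟫)
        ≤ θ * (τ * ‖w k - w (k - 1)‖ ^ 2 + σ * ‖d k - d (k - 1)‖ ^ 2
            + 2 * τ * ‖w (k + 1) - w k‖ ^ 2) := by
      have hh : 6 * σ * τ * (‖e k‖ * ‖w (k + 1) - w k‖)
          ≤ τ * ‖w k - w (k - 1)‖ ^ 2 + σ * ‖d k - d (k - 1)‖ ^ 2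
            + 2 * τ * ‖w (k + 1) - w k‖ ^ 2 := by
        have := mul_le_mul_of_nonneg_left hE (by positivity : (0:ℝ) ≤ 6 * σ * τ)
        linarith
      have h3 := mul_le_mul_of_nonneg_left hh hθ0.le
      have h4 := mul_le_mul_of_nonneg_left hcs
        (by positivity : (0:ℝ) ≤ 6 * σ * τ * θ)
      nlinarith [h3, h4]
    have hθDw : θ * (2 * τ * ‖w (k + 1) - w k‖ ^ 2) ≤ 2 * τ * ‖w (k + 1) - w k‖ ^ 2 := by
      nlinarith [mul_nonneg hτ.le (sq_nonneg ‖w (k + 1) - w k‖)]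
    have fA : 3 * τ * ‖w k - wstar‖ ^ 2
        ≤ θ * (1 + μ * σ) * (3 * τ * ‖w k - wstar‖ ^ 2) := by
      nlinarith [mul_nonneg hτ.le (sq_nonneg ‖w k - wstar‖)]
    have fB : 3 * σ * ‖d k - δstar‖ ^ 2
        ≤ θ * (1 + μ * τ) * (3 * σ * ‖d k - δstar‖ ^ 2) := by
      nlinarith [mul_nonneg hσ.le (sq_nonneg ‖d k - δstar‖)]
    simp only [hP, Nat.add_sub_cancel]
    linarith [key2, hJ, hθDw, fA, fB, mul_nonneg hσ.le (sq_nonneg ‖d (k + 1) - d k‖)]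
  have hiter : ∀ K : ℕ, P K ≤ θ ^ K * P 0 := by
    intro K
    induction K with
    | zero => simp
    | succ n ih =>
      calc P (n + 1) ≤ θ * P n := hstepk n
        _ ≤ θ * (θ ^ n * P 0) := mul_le_mul_of_nonneg_left ih hθ0.le
        _ = θ ^ (n + 1) * P 0 := by ring
  have hP0 : 0 ≤ P 0 := by
    have := hlow 0
    nlinarith [mul_nonneg hτ.le (sq_nonneg ‖w 0 - wstar‖),
      mul_nonneg hσ.le (sq_nonneg ‖d 0 - δstar‖)]
  obtain ⟨Q, hQ0, hQ⟩ : ∃ Q : ℝ, 0 ≤ Q ∧ ∀ K : ℕ,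
      τ * ‖w K - wstar‖ ^ 2 + σ * ‖d K - δstar‖ ^ 2 ≤ θ ^ K * Q :=
    ⟨P 0, hP0, fun K => le_trans (hlow K) (hiter K)⟩
  clear hP0 hiter hstepk hlow hEk hP he P e htraj hMVI hgw hgd hf hg hLww hLdw hLwd hLdd hstep
  refine ⟨(σ⁻¹ + τ⁻¹) * Q, mul_nonneg (by positivity) hQ0, ?_⟩
  intro K _
  have hPK := hQ K
  have hθK : 0 ≤ θ ^ K * Q := mul_nonneg (pow_nonneg hθ0.le K) hQ0
  constructor
  · rw [norm_sub_rev]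
    have ha : ‖w K - wstar‖ ^ 2 ≤ θ ^ K * Q / τ := by
      rw [le_div_iff₀ hτ]
      nlinarith [mul_nonneg hσ.le (sq_nonneg ‖d K - δstar‖)]
    calc ‖w K - wstar‖ ^ 2 ≤ θ ^ K * Q / τ := ha
      _ ≤ (σ⁻¹ + τ⁻¹) * Q * θ ^ K := by
        rw [div_eq_mul_inv]
        nlinarith [inv_pos.2 hσ, inv_pos.2 hτ, hθK]
  · rw [norm_sub_rev]
    have hb : ‖d K - δstar‖ ^ 2 ≤ θ ^ K * Q / σ := by
      rw [le_div_iff₀ hσ]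
      nlinarith [mul_nonneg hτ.le (sq_nonneg ‖w K - wstar‖)]
    calc ‖d K - δstar‖ ^ 2 ≤ θ ^ K * Q / σ := hb
      _ ≤ (σ⁻¹ + τ⁻¹) * Q * θ ^ K := by
        rw [div_eq_mul_inv]
        nlinarith [inv_pos.2 hσ, inv_pos.2 hτ, hθK]
end

section
/- Summability of squared successive differences for DSI-HG under the weak MVI assumption (equation (thm1_5), deterministic case n = 1). Suppose (w*, δ*) is a solution of the weak MVI with parameter ρ > 0, let θ = 1, let σ, τ > 0 satisfy max{L12·(στ)^{1/2}, L11·σ} < min{1/3 − ρ(σ^{−1} + 4L11²σ), 1 − ρ(τ^{−1} + 12L12²τ)}, and set κ = max{L12·(στ)^{1/2}, L11·σ}. Let (w^k, δ^k) be a DSI-HG trajectory with parameters σ, τ, θ = 1. Then for every K ≥ 1: ((1 − 3κ − 3ρ(σ^{−1} + 4L11²σ))/(2σ)) ∑_{k=0}^{K−1} ‖w^{k+1} − w^k‖² + ((1 − κ − ρ(τ^{−1} + 12L12²τ))/(2τ)) ∑_{k=0}^{K−1} ‖δ^{k+1} − δ^k‖² ≤ (1/(2σ))‖w* − w^0‖²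 + (1/(2τ))‖δ* − δ^0‖². -/
open scoped RealInnerProductSpace

lemma two_mul_mul_le_of_sq_le {p q c : ℝ} (hp : 0 ≤ p) (hq : 0 ≤ q) (hc : c ^ 2 ≤ p * q)
    (x y : ℝ) : 2 * c * x * y ≤ p * x ^ 2 + q * y ^ 2 := by
  rcases hp.eq_or_lt with rfl | hp
  · have hc0 : c = 0 := by nlinarith [sq_nonneg c]
    subst hc0
    nlinarith [sq_nonneg y]
  · refine le_of_mul_le_mul_left ?_ hp
    nlinarith [sq_nonneg (p * x - c * y), mul_nonneg (sub_nonneg.2 hc) (sq_nonneg y)]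

lemma sum_range_le_sub_of_add_le {V c : ℕ → ℝ} (h : ∀ k, V (k + 1) + c k ≤ V k) (n : ℕ) :
    ∑ k ∈ Finset.range n, c k ≤ V 0 - V n := by
  rw [← Finset.sum_range_sub']
  exact Finset.sum_le_sum fun k _ => le_sub_iff_add_le'.2 (h k)

lemma norm_sub_le_of_lipschitz₂ {α β γ : Type*} [SeminormedAddCommGroup α]
    [SeminormedAddCommGroup β] [SeminormedAddCommGroup γ] {G : α → β → γ} {L₁ L₂ : ℝ}
    (h₁ : ∀ x x' y, ‖G x y - G x' y‖ ≤ L₁ * ‖x - x'‖)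
    (h₂ : ∀ x y y', ‖G x y - G x y'‖ ≤ L₂ * ‖y - y'‖) (x x' : α) (y y' : β) :
    ‖G x y - G x' y'‖ ≤ L₁ * ‖x - x'‖ + L₂ * ‖y - y'‖ :=
  calc ‖G x y - G x' y'‖ = ‖(G x y - G x' y) + (G x' y - G x' y')‖ := by
        rw [sub_add_sub_cancel]
    _ ≤ L₁ * ‖x - x'‖ + L₂ * ‖y - y'‖ := (norm_add_le _ _).trans (add_le_add (h₁ ..) (h₂ ..))

lemma norm_sub_sub_sq_le {α : Type*} [SeminormedAddCommGroup α] (u v w : α) :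
    ‖u - v - w‖ ^ 2 ≤ 3 * (‖u‖ ^ 2 + ‖v‖ ^ 2 + ‖w‖ ^ 2) := by
  have h : ‖u - v - w‖ ≤ ‖u‖ + ‖v‖ + ‖w‖ :=
    (norm_sub_le _ _).trans (add_le_add_left (norm_sub_le _ _) _)
  nlinarith [norm_nonneg (u - v - w), sq_nonneg (‖u‖ - ‖v‖), sq_nonneg (‖u‖ - ‖w‖),
    sq_nonneg (‖v‖ - ‖w‖)]

lemma two_mul_real_inner_sub_sub {E : Type*} [NormedAddCommGroup E] [InnerProductSpace ℝ E]
    (x y z : E) : 2 * ⟪x - y, x - z⟫ = ‖x - y‖ ^ 2 + ‖x - z‖ ^ 2 - ‖y - z‖ ^ 2 := by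
  have h := norm_sub_sq_real (x - y) (x - z)
  rw [sub_sub_sub_cancel_left, norm_sub_rev] at h
  linarith

lemma real_inner_sub_sub_inv_smul_sub {E : Type*} [NormedAddCommGroup E]
    [InnerProductSpace ℝ E] {σ : ℝ} (hσ : σ ≠ 0) (a b x y z : E) :
    ⟪a - b - σ⁻¹ • (x - y), x - z⟫ = ⟪a, x - z⟫ - ⟪b, y - z⟫ - ⟪b, x - y⟫
      - (‖x - y‖ ^ 2 + ‖x - z‖ ^ 2 - ‖y - z‖ ^ 2) / (2 * σ) := by
  have hsplit : ⟪b, x - z⟫ = ⟪b, y - z⟫ + ⟪b, x - y⟫ := by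
    rw [← inner_add_right, sub_add_sub_cancel']
  rw [inner_sub_left, inner_sub_left, real_inner_smul_left, hsplit,
    ← two_mul_real_inner_sub_sub x y z]
  field_simp
  ring

lemma lipschitz_coupling_le {σ τ κ L₁ L₂ : ℝ} (hσ : 0 < σ) (hτ : 0 < τ) (hL₁ : 0 ≤ L₁)
    (hL₂ : 0 ≤ L₂) (hκ₁ : L₁ * σ ≤ κ) (hκ₂ : L₂ * √(σ * τ) ≤ κ) (x a b : ℝ) :
    (L₁ * a + L₂ * b) * x ≤ κ / σ * x ^ 2 + κ / (2 * σ) * a ^ 2 + κ / (2 * τ) * b ^ 2 := by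
  have hκ : 0 ≤ κ := (mul_nonneg hL₁ hσ.le).trans hκ₁
  have h₁ : L₁ ^ 2 ≤ κ / σ * (κ / σ) := by
    rw [← sq]
    exact pow_le_pow_left₀ hL₁ ((le_div_iff₀ hσ).2 hκ₁) 2
  have h₂ : L₂ ^ 2 ≤ κ / σ * (κ / τ) := by
    have := pow_le_pow_left₀ (by positivity) hκ₂ 2
    rw [mul_pow, Real.sq_sqrt (by positivity)] at this
    rw [div_mul_div_comm, ← sq, le_div_iff₀ (by positivity)]
    exact this
  have := two_mul_mul_le_of_sq_le (by positivity) (by positivity) h₁ x a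
  have := two_mul_mul_le_of_sq_le (by positivity) (by positivity) h₂ x b
  have e₁ : κ / (2 * σ) = κ / σ / 2 := by ring
  have e₂ : κ / (2 * τ) = κ / τ / 2 := by ring
  rw [e₁, e₂]
  linarith

section DSIHG

variable {E F : Type*} [NormedAddCommGroup E] [NormedAddCommGroup F]
  {Gw : E → F → E} {w : ℕ → E} {d : ℕ → F} {wstar : E} {δstar : F} {σ τ : ℝ}

variable (Gw w d) in
/-- Since `0 - 1 = 0` in `ℕ`, `gradDiff Gw w d 0 = 0`: this is the convention
`(w⁻¹, δ⁻¹) = (w⁰, δ⁰)`. -/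
def gradDiff (k : ℕ) : E :=
  Gw (w k) (d k) - Gw (w (k - 1)) (d (k - 1))

lemma norm_gradDiff_le {L₁ L₂ : ℝ} (hLww : ∀ x x' y, ‖Gw x y - Gw x' y‖ ≤ L₁ * ‖x - x'‖)
    (hLwd : ∀ x y y', ‖Gw x y - Gw x y'‖ ≤ L₂ * ‖y - y'‖) (k : ℕ) :
    ‖gradDiff Gw w d k‖ ≤ L₁ * ‖w k - w (k - 1)‖ + L₂ * ‖d k - d (k - 1)‖ :=
  norm_sub_le_of_lipschitz₂ hLww hLwd ..

lemma sq_norm_gradDiff_le {L₁ L₂ : ℝ} (hLww : ∀ x x' y, ‖Gw x y - Gw x' y‖ ≤ L₁ * ‖x - x'‖)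
    (hLwd : ∀ x y y', ‖Gw x y - Gw x y'‖ ≤ L₂ * ‖y - y'‖) (k : ℕ) :
    ‖gradDiff Gw w d k‖ ^ 2 ≤
      2 * L₁ ^ 2 * ‖w k - w (k - 1)‖ ^ 2 + 2 * L₂ ^ 2 * ‖d k - d (k - 1)‖ ^ 2 := by
  have h := pow_le_pow_left₀ (norm_nonneg _) (norm_gradDiff_le (w := w) (d := d) hLww hLwd k) 2
  linarith [add_sq_le (a := L₁ * ‖w k - w (k - 1)‖) (b := L₂ * ‖d k - d (k - 1)‖)]

variable [InnerProductSpace ℝ E]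

variable (Gw w d wstar δstar σ τ) in
/-- The weights of the last two terms pay for the cross term `⟪Δₖ, wᵏ⁺¹ - wᵏ⟫` and for the
weak-MVI slack `ρ/2 ‖residual‖²` carried over from the previous step. -/
noncomputable def dsihgPotential (ρ κ L₁ L₂ : ℝ) (k : ℕ) : ℝ :=
  ‖w k - wstar‖ ^ 2 / (2 * σ) + ‖d k - δstar‖ ^ 2 / (2 * τ) - ⟪gradDiff Gw w d k, w k - wstar⟫
    + (κ / (2 * σ) + 3 * ρ * L₁ ^ 2) * ‖w k - w (k - 1)‖ ^ 2
    + (κ / (2 * τ) + 3 * ρ * L₂ ^ 2) * ‖d k - d (k - 1)‖ ^ 2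

lemma dsihgPotential_zero (ρ κ L₁ L₂ : ℝ) :
    dsihgPotential Gw w d wstar δstar σ τ ρ κ L₁ L₂ 0 =
      ‖w 0 - wstar‖ ^ 2 / (2 * σ) + ‖d 0 - δstar‖ ^ 2 / (2 * τ) := by
  simp [dsihgPotential, gradDiff]

lemma dsihgPotential_nonneg {ρ κ L₁ L₂ : ℝ} (hσ : 0 < σ) (hτ : 0 < τ) (hρ : 0 ≤ ρ)
    (hL₁ : 0 ≤ L₁) (hL₂ : 0 ≤ L₂) (hLww : ∀ x x' y, ‖Gw x y - Gw x' y‖ ≤ L₁ * ‖x - x'‖)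
    (hLwd : ∀ x y y', ‖Gw x y - Gw x y'‖ ≤ L₂ * ‖y - y'‖) (hκ₁ : L₁ * σ ≤ κ)
    (hκ₂ : L₂ * √(σ * τ) ≤ κ) (hκ : κ ≤ 1 / 2) (k : ℕ) :
    0 ≤ dsihgPotential Gw w d wstar δstar σ τ ρ κ L₁ L₂ k := by
  have hinner : ⟪gradDiff Gw w d k, w k - wstar⟫ ≤
      (L₁ * ‖w k - w (k - 1)‖ + L₂ * ‖d k - d (k - 1)‖) * ‖w k - wstar‖ :=
    (real_inner_le_norm _ _).trans
      (mul_le_mul_of_nonneg_right (norm_gradDiff_le hLww hLwd k) (norm_nonneg _))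
  have hcoup := lipschitz_coupling_le hσ hτ hL₁ hL₂ hκ₁ hκ₂ ‖w k - wstar‖ ‖w k - w (k - 1)‖
    ‖d k - d (k - 1)‖
  have hκσ : κ / σ * ‖w k - wstar‖ ^ 2 ≤ ‖w k - wstar‖ ^ 2 / (2 * σ) := by
    have e₁ : κ / σ * ‖w k - wstar‖ ^ 2 = κ * (‖w k - wstar‖ ^ 2 / σ) := by ring
    have e₂ : ‖w k - wstar‖ ^ 2 / (2 * σ) = 1 / 2 * (‖w k - wstar‖ ^ 2 / σ) := by ring
    rw [e₁, e₂]
    exact mul_le_mul_of_nonneg_right hκ (by positivity)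
  unfold dsihgPotential
  have : 0 ≤ ‖d k - δstar‖ ^ 2 / (2 * τ) := by positivity
  have : 0 ≤ 3 * ρ * L₁ ^ 2 * ‖w k - w (k - 1)‖ ^ 2 := by positivity
  have : 0 ≤ 3 * ρ * L₂ ^ 2 * ‖d k - d (k - 1)‖ ^ 2 := by positivity
  linarith

variable [InnerProductSpace ℝ F]

lemma weakMVI_dsihg_residual {f : E → ℝ} {g : F → ℝ} {Gd : E → F → F} {ρ : ℝ}
    (hMVI : ∀ (x : E) (y : F) (γf : E) (γg : F),
      IsSubgradient f x γf → IsSubgradient g y γg →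
      ⟪γf + Gw x y, x - wstar⟫ + ⟪γg - Gd x y, y - δstar⟫ ≥
        -(ρ / 2) * (‖γf + Gw x y‖ ^ 2 + ‖γg - Gd x y‖ ^ 2))
    {k : ℕ} (hk : ∃ (γf : E) (γg : F),
      IsSubgradient f (w (k + 1)) γf ∧ IsSubgradient g (d (k + 1)) γg ∧
      (0 : E) = γf + σ⁻¹ • (w (k + 1) - w k) + Gw (w k) (d k)
        + (1 : ℝ) • (Gw (w k) (d k) - Gw (w (k - 1)) (d (k - 1))) ∧
      (0 : F) = γg + τ⁻¹ • (d (k + 1) - d k) - Gd (w (k + 1)) (d (k + 1))) :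
    ⟪gradDiff Gw w d (k + 1) - gradDiff Gw w d k - σ⁻¹ • (w (k + 1) - w k),
        w (k + 1) - wstar⟫ + ⟪-(τ⁻¹ • (d (k + 1) - d k)), d (k + 1) - δstar⟫ ≥
      -(ρ / 2) * (‖gradDiff Gw w d (k + 1) - gradDiff Gw w d k - σ⁻¹ • (w (k + 1) - w k)‖ ^ 2
        + ‖-(τ⁻¹ • (d (k + 1) - d k))‖ ^ 2) := by
  obtain ⟨γf, γg, hγf, hγg, hw, hd⟩ := hk
  have hrw : γf + Gw (w (k + 1)) (d (k + 1)) =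
      gradDiff Gw w d (k + 1) - gradDiff Gw w d k - σ⁻¹ • (w (k + 1) - w k) := by
    simp only [gradDiff, Nat.add_sub_cancel]
    linear_combination (norm := module) -hw
  have hrd : γg - Gd (w (k + 1)) (d (k + 1)) = -(τ⁻¹ • (d (k + 1) - d k)) := by
    linear_combination (norm := module) -hd
  rw [← hrw, ← hrd]
  exact hMVI _ _ γf γg hγf hγg

lemma dsihgPotential_succ_add_le {ρ κ L₁ L₂ : ℝ} (hσ : 0 < σ) (hτ : 0 < τ) (hρ : 0 ≤ ρ)
    (hL₁ : 0 ≤ L₁) (hL₂ : 0 ≤ L₂) (hLww : ∀ x x' y, ‖Gw x y - Gw x' y‖ ≤ L₁ * ‖x - x'‖)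
    (hLwd : ∀ x y y', ‖Gw x y - Gw x y'‖ ≤ L₂ * ‖y - y'‖) (hκ₁ : L₁ * σ ≤ κ)
    (hκ₂ : L₂ * √(σ * τ) ≤ κ) {k : ℕ}
    (hmvi : ⟪gradDiff Gw w d (k + 1) - gradDiff Gw w d k - σ⁻¹ • (w (k + 1) - w k),
        w (k + 1) - wstar⟫ + ⟪-(τ⁻¹ • (d (k + 1) - d k)), d (k + 1) - δstar⟫ ≥
      -(ρ / 2) * (‖gradDiff Gw w d (k + 1) - gradDiff Gw w d k - σ⁻¹ • (w (k + 1) - w k)‖ ^ 2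
        + ‖-(τ⁻¹ • (d (k + 1) - d k))‖ ^ 2)) :
    dsihgPotential Gw w d wstar δstar σ τ ρ κ L₁ L₂ (k + 1)
      + ((1 - 3 * κ - 3 * ρ * (σ⁻¹ + 4 * L₁ ^ 2 * σ)) / (2 * σ) * ‖w (k + 1) - w k‖ ^ 2
        + (1 - κ - ρ * (τ⁻¹ + 12 * L₂ ^ 2 * τ)) / (2 * τ) * ‖d (k + 1) - d k‖ ^ 2)
      ≤ dsihgPotential Gw w d wstar δstar σ τ ρ κ L₁ L₂ k := by
  set Δ₀ := gradDiff Gw w d k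
  set Δ₁ := gradDiff Gw w d (k + 1)
  have hw := real_inner_sub_sub_inv_smul_sub hσ.ne' Δ₁ Δ₀ (w (k + 1)) (w k) wstar
  have hd : ⟪-(τ⁻¹ • (d (k + 1) - d k)), d (k + 1) - δstar⟫ =
      -(‖d (k + 1) - d k‖ ^ 2 + ‖d (k + 1) - δstar‖ ^ 2 - ‖d k - δstar‖ ^ 2) / (2 * τ) := by
    rw [inner_neg_left, real_inner_smul_left, ← two_mul_real_inner_sub_sub]
    field_simp
  have hdn : ‖-(τ⁻¹ • (d (k + 1) - d k))‖ ^ 2 = ‖d (k + 1) - d k‖ ^ 2 / τ ^ 2 := by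
    rw [norm_neg, norm_smul, Real.norm_of_nonneg (inv_nonneg.2 hτ.le)]
    field_simp
  have hcross : -⟪Δ₀, w (k + 1) - w k⟫ ≤ κ / σ * ‖w (k + 1) - w k‖ ^ 2
      + κ / (2 * σ) * ‖w k - w (k - 1)‖ ^ 2 + κ / (2 * τ) * ‖d k - d (k - 1)‖ ^ 2 :=
    calc -⟪Δ₀, w (k + 1) - w k⟫ ≤ ‖Δ₀‖ * ‖w (k + 1) - w k‖ :=
          (neg_le_abs _).trans (abs_real_inner_le_norm _ _)
      _ ≤ (L₁ * ‖w k - w (k - 1)‖ + L₂ * ‖d k - d (k - 1)‖) * ‖w (k + 1) - w k‖ :=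
          mul_le_mul_of_nonneg_right (norm_gradDiff_le hLww hLwd k) (norm_nonneg _)
      _ ≤ _ := lipschitz_coupling_le hσ hτ hL₁ hL₂ hκ₁ hκ₂ ..
  have hres : ‖Δ₁ - Δ₀ - σ⁻¹ • (w (k + 1) - w k)‖ ^ 2 ≤
      3 * (‖Δ₁‖ ^ 2 + ‖Δ₀‖ ^ 2 + ‖w (k + 1) - w k‖ ^ 2 / σ ^ 2) := by
    have := norm_sub_sub_sq_le Δ₁ Δ₀ (σ⁻¹ • (w (k + 1) - w k))
    rwa [norm_smul, Real.norm_of_nonneg (inv_nonneg.2 hσ.le), mul_pow, inv_pow,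
      inv_mul_eq_div] at this
  have hΔ₁ := sq_norm_gradDiff_le (w := w) (d := d) hLww hLwd (k + 1)
  have hΔ₀ := sq_norm_gradDiff_le (w := w) (d := d) hLww hLwd k
  simp only [Nat.add_sub_cancel] at hΔ₁
  rw [hw, hd, hdn] at hmvi
  have hcw : (1 - 3 * κ - 3 * ρ * (σ⁻¹ + 4 * L₁ ^ 2 * σ)) / (2 * σ) =
      (1 - 3 * κ) / (2 * σ) - 3 * ρ / 2 / σ ^ 2 - 6 * ρ * L₁ ^ 2 := by
    field_simp
    ring
  have hcd : (1 - κ - ρ * (τ⁻¹ + 12 * L₂ ^ 2 * τ)) / (2 * τ) =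
      (1 - κ) / (2 * τ) - ρ / 2 / τ ^ 2 - 6 * ρ * L₂ ^ 2 := by
    field_simp
    ring
  unfold dsihgPotential
  simp only [Nat.add_sub_cancel]
  rw [hcw, hcd]
  linear_combination hmvi + hcross + ρ / 2 * hres + 3 * ρ / 2 * hΔ₁ + 3 * ρ / 2 * hΔ₀

end DSIHG

theorem dsihg_summability_squared_differences_weak_mvi_general
    {E F : Type*}
    [NormedAddCommGroup E] [InnerProductSpace ℝ E]
    [NormedAddCommGroup F] [InnerProductSpace ℝ F]
    (Gw : E → F → E) (Gd : E → F → F)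
    (L11 L12 : ℝ) (hL11 : 0 < L11) (hL12 : 0 < L12)
    (hLww : ∀ (w w' : E) (δ : F), ‖Gw w δ - Gw w' δ‖ ≤ L11 * ‖w - w'‖)
    (hLwd : ∀ (w : E) (δ δ' : F), ‖Gw w δ - Gw w δ'‖ ≤ L12 * ‖δ - δ'‖)
    (f : E → ℝ) (g : F → ℝ)
    (wstar : E) (δstar : F) (ρ : ℝ) (hρ : 0 < ρ)
    (hMVI : ∀ (w : E) (δ : F) (γf : E) (γg : F),
      IsSubgradient f w γf → IsSubgradient g δ γg →
      ⟪γf + Gw w δ, w - wstar⟫ + ⟪γg - Gd w δ, δ - δstar⟫ ≥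
        -(ρ / 2) * (‖γf + Gw w δ‖ ^ 2 + ‖γg - Gd w δ‖ ^ 2))
    (σ τ θ : ℝ) (hσ : 0 < σ) (hτ : 0 < τ) (hθ : θ = 1)
    (κ : ℝ) (hκ : κ = max (L12 * Real.sqrt (σ * τ)) (L11 * σ))
    (hstep : κ <
      min (1 / 3 - ρ * (σ⁻¹ + 4 * L11 ^ 2 * σ)) (1 - ρ * (τ⁻¹ + 12 * L12 ^ 2 * τ)))
    (w : ℕ → E) (d : ℕ → F)
    (htraj : ∀ k : ℕ, ∃ (γf : E) (γg : F),
      IsSubgradient f (w (k + 1)) γf ∧ IsSubgradient g (d (k + 1)) γg ∧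
      (0 : E) = γf + σ⁻¹ • (w (k + 1) - w k) + Gw (w k) (d k)
        + θ • (Gw (w k) (d k) - Gw (w (k - 1)) (d (k - 1))) ∧
      (0 : F) = γg + τ⁻¹ • (d (k + 1) - d k) - Gd (w (k + 1)) (d (k + 1))) :
    ∀ K : ℕ, 1 ≤ K →
      ((1 - 3 * κ - 3 * ρ * (σ⁻¹ + 4 * L11 ^ 2 * σ)) / (2 * σ)) *
          ∑ k ∈ Finset.range K, ‖w (k + 1) - w k‖ ^ 2
        + ((1 - κ - ρ * (τ⁻¹ + 12 * L12 ^ 2 * τ)) / (2 * τ)) *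
          ∑ k ∈ Finset.range K, ‖d (k + 1) - d k‖ ^ 2
      ≤ (1 / (2 * σ)) * ‖wstar - w 0‖ ^ 2 + (1 / (2 * τ)) * ‖δstar - d 0‖ ^ 2 := by
  subst hθ
  intro K _
  have hκ₁ : L11 * σ ≤ κ := hκ ▸ le_max_right _ _
  have hκ₂ : L12 * √(σ * τ) ≤ κ := hκ ▸ le_max_left _ _
  have hκ_half : κ ≤ 1 / 2 := by
    have : 0 < ρ * (σ⁻¹ + 4 * L11 ^ 2 * σ) := by positivity
    linarith [hstep.trans_le (min_le_left _ _)]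
  have hsum := sum_range_le_sub_of_add_le (fun k => dsihgPotential_succ_add_le hσ hτ hρ.le
    hL11.le hL12.le hLww hLwd hκ₁ hκ₂ (weakMVI_dsihg_residual hMVI (htraj k))) K
  have hpos := dsihgPotential_nonneg (w := w) (d := d) (wstar := wstar) (δstar := δstar) (ρ := ρ)
    hσ hτ hρ.le hL11.le hL12.le hLww hLwd hκ₁ hκ₂ hκ_half K
  rw [Finset.sum_add_distrib, ← Finset.mul_sum, ← Finset.mul_sum, dsihgPotential_zero] at hsum
  rw [norm_sub_rev wstar, norm_sub_rev δstar, one_div_mul_eq_div, one_div_mul_eq_div]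
  linarith

/-- Summability of squared successive differences for DSI-HG under the weak MVI
assumption (equation (thm1_5), deterministic case n = 1). -/
theorem dsihg_summability_squared_differences_weak_mvi
    {E F : Type*}
    [NormedAddCommGroup E] [InnerProductSpace ℝ E] [FiniteDimensional ℝ E]
    [NormedAddCommGroup F] [InnerProductSpace ℝ F] [FiniteDimensional ℝ F]
    (φ : E → F → ℝ) (Gw : E → F → E) (Gd : E → F → F)
    (hgw : ∀ (w : E) (δ : F), HasGradientAt (fun w' => φ w' δ) (Gw w δ) w)
    (hgd : ∀ (w : E) (δ : F), HasGradientAt (fun δ' => φ w δ') (Gd w δ) δ)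
    (L11 L12 L22 : ℝ) (hL11 : 0 < L11) (hL12 : 0 < L12) (hL22 : 0 < L22)
    (hLww : ∀ (w w' : E) (δ : F), ‖Gw w δ - Gw w' δ‖ ≤ L11 * ‖w - w'‖)
    (hLdw : ∀ (w w' : E) (δ : F), ‖Gd w δ - Gd w' δ‖ ≤ L12 * ‖w - w'‖)
    (hLwd : ∀ (w : E) (δ δ' : F), ‖Gw w δ - Gw w δ'‖ ≤ L12 * ‖δ - δ'‖)
    (hLdd : ∀ (w : E) (δ δ' : F), ‖Gd w δ - Gd w δ'‖ ≤ L22 * ‖δ - δ'‖)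
    (f : E → ℝ) (g : F → ℝ)
    (hf : ConvexOn ℝ Set.univ f) (hg : ConvexOn ℝ Set.univ g)
    (wstar : E) (δstar : F) (ρ : ℝ) (hρ : 0 < ρ)
    (hMVI : ∀ (w : E) (δ : F) (γf : E) (γg : F),
      IsSubgradient f w γf → IsSubgradient g δ γg →
      ⟪γf + Gw w δ, w - wstar⟫ + ⟪γg - Gd w δ, δ - δstar⟫ ≥
        -(ρ / 2) * (‖γf + Gw w δ‖ ^ 2 + ‖γg - Gd w δ‖ ^ 2))
    (σ τ θ : ℝ) (hσ : 0 < σ) (hτ : 0 < τ) (hθ : θ = 1)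
    (κ : ℝ) (hκ : κ = max (L12 * Real.sqrt (σ * τ)) (L11 * σ))
    (hstep : κ <
      min (1 / 3 - ρ * (σ⁻¹ + 4 * L11 ^ 2 * σ)) (1 - ρ * (τ⁻¹ + 12 * L12 ^ 2 * τ)))
    (w : ℕ → E) (d : ℕ → F)
    (htraj : ∀ k : ℕ, ∃ (γf : E) (γg : F),
      IsSubgradient f (w (k + 1)) γf ∧ IsSubgradient g (d (k + 1)) γg ∧
      (0 : E) = γf + σ⁻¹ • (w (k + 1) - w k) + Gw (w k) (d k)
        + θ • (Gw (w k) (d k) - Gw (w (k - 1)) (d (k - 1))) ∧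
      (0 : F) = γg + τ⁻¹ • (d (k + 1) - d k) - Gd (w (k + 1)) (d (k + 1))) :
    ∀ K : ℕ, 1 ≤ K →
      ((1 - 3 * κ - 3 * ρ * (σ⁻¹ + 4 * L11 ^ 2 * σ)) / (2 * σ)) *
          ∑ k ∈ Finset.range K, ‖w (k + 1) - w k‖ ^ 2
        + ((1 - κ - ρ * (τ⁻¹ + 12 * L12 ^ 2 * τ)) / (2 * τ)) *
          ∑ k ∈ Finset.range K, ‖d (k + 1) - d k‖ ^ 2
      ≤ (1 / (2 * σ)) * ‖wstar - w 0‖ ^ 2 + (1 / (2 * τ)) * ‖δstar - d 0‖ ^ 2 :=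
  dsihg_summability_squared_differences_weak_mvi_general Gw Gd L11 L12 hL11 hL12 hLww hLwd f g wstar
    δstar ρ hρ hMVI σ τ θ hσ hτ hθ κ hκ hstep w d htraj
end
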